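/- Assume the RNdS parameters (Λ, M, Q) (with Λ > 0, M > 0) are non-degenerate, with horizon radii r₋ < r₊ and photon sphere radius r_P (the unique critical point of ψ(r) := μ(r)/r² in (r₋, r₊)). Set a := μ(r_P)⁻² r_P² ψ″(r_P) and b := −2μ(r_P). Then a < 0 and b < 0, and the 2×2 real matrix [[0, a], [b, 0]] has exactly two eigenvalues, namely √(ab) > 0 and −√(ab) < 0. In particular, the minimal and maximal expansion rates of the linearized flow in the directions normal to the trapped set coincide. -/

import Mathlib

/-!
The photon sphere is a nondegenerate maximum of `ψ = μ/r²`: since `μ → -∞` and `μ` has no zero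
beyond `r₊`, it is negative there, so it must be positive on `(r₋, r₊)` (otherwise `r₊` would be a
local maximum of `μ`, forcing `μ'(r₊) = 0`). Hence `ψ(r_P) > 0 = ψ(r₊)`, so `ψ'` is negative on
`(r_P, r₊)`, where it has no zero, and `ψ''(r_P) ≠ 0` must be negative. This gives `a, b < 0`,
and `[[0, a], [b, 0]]` has characteristic polynomial `X² - ab`.
-/

/-- The Reissner–Nordström–de Sitter metric coefficient
`μ(r) = 1 − 2M/r − Λr²/3 + Q²/r²`. -/
noncomputable def mu (Λ M Q r : ℝ) : ℝ := 1 - 2 * M / r - Λ * r ^ 2 / 3 + Q ^ 2 / r ^ 2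

/-- `ψ(r) = μ(r)/r²`. -/
noncomputable def psi (Λ M Q r : ℝ) : ℝ := mu Λ M Q r / r ^ 2

/-- Non-degeneracy of the RNdS parameters `(Λ, M, Q)`, witnessed by the horizon radii
`0 < rm < rp`. -/
def NondegAt (Λ M Q rm rp : ℝ) : Prop :=
  0 < rm ∧ rm < rp ∧
  mu Λ M Q rm = 0 ∧ mu Λ M Q rp = 0 ∧
  deriv (mu Λ M Q) rm ≠ 0 ∧ deriv (mu Λ M Q) rp ≠ 0 ∧
  (∀ r : ℝ, (rm < r ∧ r < rp) ∨ rp < r → mu Λ M Q r ≠ 0) ∧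
  ∃ rP ∈ Set.Ioo rm rp,
    deriv (psi Λ M Q) rP = 0 ∧
    deriv (deriv (psi Λ M Q)) rP ≠ 0 ∧
    ∀ r ∈ Set.Ioo rm rp, deriv (psi Λ M Q) r = 0 → r = rP

open Set Filter Topology Polynomial

theorem IsPreconnected.forall_neg_of_ne_zero {X : Type*} [TopologicalSpace X] {s : Set X}
    (hs : IsPreconnected s) {f : X → ℝ} (hf : ContinuousOn f s) (hf₀ : ∀ x ∈ s, f x ≠ 0)
    {a : X} (ha : a ∈ s) (hfa : f a < 0) : ∀ x ∈ s, f x < 0 := by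
  intro x hx
  by_contra! hfx
  obtain ⟨c, hc, hfc⟩ := hs.intermediate_value ha hx hf ⟨hfa.le, hfx⟩
  exact hf₀ c hc hfc

theorem Matrix.mem_spectrum_antidiag_iff {K : Type*} [Field K] {a b x : K} :
    x ∈ spectrum K !![0, a; b, 0] ↔ x ^ 2 = a * b := by
  rw [Matrix.mem_spectrum_iff_isRoot_charpoly, Matrix.charpoly_fin_two, Matrix.trace_fin_two_of,
    Matrix.det_fin_two_of, IsRoot.def]
  simp [add_neg_eq_zero]

theorem Matrix.spectrum_antidiag {a b : ℝ} (hab : 0 ≤ a * b) :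
    spectrum ℝ !![0, a; b, 0] = {√(a * b), -√(a * b)} := by
  ext x
  rw [mem_insert_iff, mem_singleton_iff, ← sq_eq_sq_iff_eq_or_eq_neg, Real.sq_sqrt hab,
    Matrix.mem_spectrum_antidiag_iff]

section RNdS

variable {Λ M Q rm rp rP : ℝ}

theorem contDiffOn_mu {n : WithTop ℕ∞} : ContDiffOn ℝ n (mu Λ M Q) (Ioi 0) := by
  have hr : ∀ r ∈ Ioi (0 : ℝ), r ≠ 0 := fun r hr ↦ (mem_Ioi.mp hr).ne'
  have hr₂ : ∀ r ∈ Ioi (0 : ℝ), r ^ 2 ≠ 0 := fun r hr' ↦ pow_ne_zero 2 (hr r hr')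
  unfold mu
  exact ((contDiffOn_const.sub (contDiffOn_const.div contDiffOn_id hr)).sub
    ((contDiffOn_const.mul (contDiffOn_id.pow 2)).div_const 3)).add
    (contDiffOn_const.div (contDiffOn_id.pow 2) hr₂)

theorem contDiffOn_psi {n : WithTop ℕ∞} : ContDiffOn ℝ n (psi Λ M Q) (Ioi 0) :=
  contDiffOn_mu.div (contDiffOn_id.pow 2) fun _ hr ↦ pow_ne_zero 2 (mem_Ioi.mp hr).ne'

theorem tendsto_mu_atTop (hΛ : 0 < Λ) : Tendsto (mu Λ M Q) atTop atBot := by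
  have h_tail : Tendsto (fun r : ℝ ↦ 1 - 2 * M / r + Q ^ 2 / r ^ 2) atTop (𝓝 (1 - 0 + 0)) :=
    (tendsto_const_nhds.sub (tendsto_const_nhds.div_atTop tendsto_id)).add
      (tendsto_const_nhds.div_atTop (tendsto_pow_atTop two_ne_zero))
  have h_cosmo : Tendsto (fun r : ℝ ↦ -(Λ * r ^ 2 / 3)) atTop atBot :=
    tendsto_neg_atTop_atBot.comp
      (((tendsto_pow_atTop two_ne_zero).const_mul_atTop hΛ).atTop_div_const three_pos)
  refine (h_tail.add_atBot h_cosmo).congr fun _ ↦ ?_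
  simp only [mu]
  ring

theorem NondegAt.mu_pos (hΛ : 0 < Λ) (h : NondegAt Λ M Q rm rp) :
    ∀ r ∈ Ioo rm rp, 0 < mu Λ M Q r := by
  obtain ⟨hrm, hrmp, -, hμp, -, hμ'p, hμ₀, -⟩ := h
  have hcont : ContinuousOn (mu Λ M Q) (Ioi rm) :=
    (contDiffOn_mu (n := 0)).continuousOn.mono (Ioi_subset_Ioi hrm.le)
  obtain ⟨R, hμR, hRp⟩ :=
    (((tendsto_mu_atTop hΛ).eventually_lt_atBot 0).and (eventually_gt_atTop rp)).exists
  have h_outer : ∀ r ∈ Ioi rp, mu Λ M Q r < 0 :=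
    isPreconnected_Ioi.forall_neg_of_ne_zero (hcont.mono (Ioi_subset_Ioi hrmp.le))
      (fun r hr ↦ hμ₀ r (Or.inr hr)) hRp hμR
  intro r hr
  by_contra! hμr
  have h_inner : ∀ s ∈ Ioo rm rp, mu Λ M Q s < 0 :=
    isPreconnected_Ioo.forall_neg_of_ne_zero (hcont.mono Ioo_subset_Ioi_self)
      (fun s hs ↦ hμ₀ s (Or.inl hs)) hr (hμr.lt_of_ne (hμ₀ r (Or.inl hr)))
  have hmax : IsLocalMax (mu Λ M Q) rp := by
    filter_upwards [Ioi_mem_nhds hrmp] with s hs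
    rcases lt_trichotomy s rp with hsp | rfl | hsp
    · exact hμp ▸ (h_inner s ⟨hs, hsp⟩).le
    · exact le_rfl
    · exact hμp ▸ (h_outer s hsp).le
  exact hμ'p hmax.deriv_eq_zero

theorem NondegAt.eq_of_deriv_psi_eq_zero (h : NondegAt Λ M Q rm rp) (hrP : rP ∈ Ioo rm rp)
    (hcrit : deriv (psi Λ M Q) rP = 0) {r : ℝ} (hr : r ∈ Ioo rm rp)
    (hr' : deriv (psi Λ M Q) r = 0) : r = rP := by
  obtain ⟨-, -, -, -, -, -, -, _, -, -, -, huniq⟩ := h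
  rw [huniq r hr hr', huniq rP hrP hcrit]

theorem NondegAt.deriv_deriv_psi_ne_zero (h : NondegAt Λ M Q rm rp) (hrP : rP ∈ Ioo rm rp)
    (hcrit : deriv (psi Λ M Q) rP = 0) : deriv (deriv (psi Λ M Q)) rP ≠ 0 := by
  obtain ⟨-, -, -, -, -, -, -, _, -, -, hsecond, huniq⟩ := h
  rwa [huniq rP hrP hcrit]

theorem NondegAt.deriv_psi_neg (hΛ : 0 < Λ) (h : NondegAt Λ M Q rm rp) (hrP : rP ∈ Ioo rm rp)
    (hcrit : deriv (psi Λ M Q) rP = 0) : ∀ r ∈ Ioo rP rp, deriv (psi Λ M Q) r < 0 := by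
  have hrP₀ : 0 < rP := h.1.trans hrP.1
  have hsub : Icc rP rp ⊆ Ioi 0 := fun r hr ↦ hrP₀.trans_le hr.1
  have hψP : 0 < psi Λ M Q rP := div_pos (h.mu_pos hΛ rP hrP) (pow_pos hrP₀ 2)
  have hψp : psi Λ M Q rp = 0 := by simp [psi, h.2.2.2.1]
  obtain ⟨c, hc, hψ'c⟩ := exists_deriv_eq_slope (psi Λ M Q) hrP.2
    ((contDiffOn_psi (n := 0)).continuousOn.mono hsub)
    ((contDiffOn_psi (n := 1)).differentiableOn one_ne_zero |>.mono
      (Ioo_subset_Icc_self.trans hsub))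
  have hc_neg : deriv (psi Λ M Q) c < 0 := by
    rw [hψ'c, hψp]
    exact div_neg_of_neg_of_pos (sub_neg.2 hψP) (sub_pos.2 hrP.2)
  refine isPreconnected_Ioo.forall_neg_of_ne_zero ?_ ?_ hc hc_neg
  · exact ((contDiffOn_psi (n := 1)).continuousOn_deriv_of_isOpen isOpen_Ioi le_rfl).mono
      (Ioo_subset_Icc_self.trans hsub)
  · intro r hr hr'
    exact hr.1.ne' (h.eq_of_deriv_psi_eq_zero hrP hcrit ⟨hrP.1.trans hr.1, hr.2⟩ hr')

theorem NondegAt.deriv_deriv_psi_neg (hΛ : 0 < Λ) (h : NondegAt Λ M Q rm rp)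
    (hrP : rP ∈ Ioo rm rp) (hcrit : deriv (psi Λ M Q) rP = 0) :
    deriv (deriv (psi Λ M Q)) rP < 0 := by
  refine (h.deriv_deriv_psi_ne_zero hrP hcrit).lt_or_gt.resolve_right fun hpos ↦ ?_
  have hsign : ∀ᶠ r in 𝓝[>] rP, SignType.sign (deriv (psi Λ M Q) r) = SignType.sign (r - rP) :=
    nhdsWithin_le_nhds (eventually_nhdsWithin_sign_eq_of_deriv_pos hpos hcrit)
  obtain ⟨r, hsign, hr⟩ := (hsign.and (Ioo_mem_nhdsGT hrP.2)).exists
  rw [sign_neg (h.deriv_psi_neg hΛ hrP hcrit r hr),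
    sign_pos (sub_pos.2 hr.1)] at hsign
  exact absurd hsign (by decide)

end RNdS

theorem trapped_set_linearization_eigenvalues_general (Λ M Q rm rp rP a b : ℝ)
    (hΛ : 0 < Λ)
    (h : NondegAt Λ M Q rm rp)
    (hrP : rP ∈ Set.Ioo rm rp) (hcrit : deriv (psi Λ M Q) rP = 0)
    (ha : a = (mu Λ M Q rP ^ 2)⁻¹ * rP ^ 2 * deriv (deriv (psi Λ M Q)) rP)
    (hb : b = -2 * mu Λ M Q rP) :
    a < 0 ∧ b < 0 ∧ 0 < Real.sqrt (a * b) ∧ -Real.sqrt (a * b) < 0 ∧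
    spectrum ℝ (!![0, a; b, 0] : Matrix (Fin 2) (Fin 2) ℝ) =
      {Real.sqrt (a * b), -Real.sqrt (a * b)} := by
  have hμP : 0 < mu Λ M Q rP := h.mu_pos hΛ rP hrP
  have ha_neg : a < 0 := ha ▸ mul_neg_of_pos_of_neg
    (mul_pos (inv_pos.2 (pow_pos hμP 2)) (pow_pos (h.1.trans hrP.1) 2))
    (h.deriv_deriv_psi_neg hΛ hrP hcrit)
  have hb_neg : b < 0 := by linarith
  have hab : 0 < a * b := mul_pos_of_neg_of_neg ha_neg hb_neg
  have hsqrt : 0 < √(a * b) := Real.sqrt_pos.2 hab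
  exact ⟨ha_neg, hb_neg, hsqrt, neg_neg_of_pos hsqrt, Matrix.spectrum_antidiag hab.le⟩

/-- At the photon sphere radius `rP` of a non-degenerate RNdS black hole, set
`a = μ(rP)⁻² rP² ψ″(rP)` and `b = −2μ(rP)`. Then `a < 0`, `b < 0`, and the linearization
`[[0, a], [b, 0]]` of the flow normal to the trapped set has exactly the two eigenvalues
`√(ab) > 0` and `−√(ab) < 0`; in particular minimal and maximal expansion rates coincide. -/
theorem trapped_set_linearization_eigenvalues (Λ M Q rm rp rP a b : ℝ)
    (hΛ : 0 < Λ) (hM : 0 < M)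
    (h : NondegAt Λ M Q rm rp)
    (hrP : rP ∈ Set.Ioo rm rp) (hcrit : deriv (psi Λ M Q) rP = 0)
    (ha : a = (mu Λ M Q rP ^ 2)⁻¹ * rP ^ 2 * deriv (deriv (psi Λ M Q)) rP)
    (hb : b = -2 * mu Λ M Q rP) :
    a < 0 ∧ b < 0 ∧ 0 < Real.sqrt (a * b) ∧ -Real.sqrt (a * b) < 0 ∧
    spectrum ℝ (!![0, a; b, 0] : Matrix (Fin 2) (Fin 2) ℝ) =
      {Real.sqrt (a * b), -Real.sqrt (a * b)} :=
  trapped_set_linearization_eigenvalues_general Λ M Q rm rp rP a b hΛ h hrP hcrit ha hb
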